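/- Let N ∈ ℕ, let E be a type and S = {a, d}. For a configuration z : {1,…,N} → E × S and i ≠ j define φ_{ij}(z) to be z with z_j replaced by z_i if both z_i and z_j have state a, and φ_{ij}(z) = z otherwise. Then for every f : (E × S)^N → ℝ and every configuration z, summing over all permutations π of {1,…,N} (with (z_π)_i = z_{π(i)}): ∑_π ∑_{i ≠ j} (f(φ_{ij}(z_π)) − f(z_π)) = 2 ∑_π ∑_{i < j} (f(φ_{ij}(z_π)) − f(z_π)). -/
import Mathlib


/-- The state space `S = {a, d}` (active / dormant). -/
inductive SBState where
  | a : SBState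
  | d : SBState
deriving DecidableEq

open Finset

noncomputable section

/-- `φ_{ij}(z)`: replace `z_j` by `z_i` if both `z_i` and `z_j` are active, otherwise `z`. -/
def phiIJ {E : Type*} {N : ℕ} (i j : Fin N) (z : Fin N → E × SBState) : Fin N → E × SBState :=
  if (z i).2 = SBState.a ∧ (z j).2 = SBState.a then Function.update z j (z i) else z

lemma key_symm {E : Type*} {N : ℕ}
    (f : (Fin N → E × SBState) → ℝ) (z : Fin N → E × SBState) (i j : Fin N) (hij : i ≠ j) :
    ∑ π : Equiv.Perm (Fin N), f (phiIJ i j (fun l => z (π l)))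
      = ∑ π : Equiv.Perm (Fin N), f (phiIJ j i (fun l => z (π l))) := by
  classical
  set σ := Equiv.swap i j with hσ
  set C : Equiv.Perm (Fin N) → Prop :=
    fun π => (z (π i)).2 = SBState.a ∧ (z (π j)).2 = SBState.a with hC
  have hL : ∀ π : Equiv.Perm (Fin N),
      f (phiIJ i j (fun l => z (π l)))
        = if C π then f (Function.update (fun l => z (π l)) j (z (π i)))
          else f (fun l => z (π l)) := by
    intro π; rw [phiIJ, apply_ite f]
  have hR : ∀ π : Equiv.Perm (Fin N),
      f (phiIJ j i (fun l => z (π l)))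
        = if C π then f (Function.update (fun l => z (π l)) i (z (π j)))
          else f (fun l => z (π l)) := by
    intro π
    rw [phiIJ, apply_ite f]
    exact if_congr and_comm rfl rfl
  have hCswap : ∀ π : Equiv.Perm (Fin N), C (π * σ) ↔ C π := by
    intro π
    simp only [hC, Equiv.Perm.mul_apply, hσ, Equiv.swap_apply_left, Equiv.swap_apply_right]
    exact and_comm
  have hσσ : ∀ π : Equiv.Perm (Fin N), π * σ * σ = π := by
    intro π
    rw [mul_assoc, hσ, Equiv.swap_mul_self, mul_one]
  simp only [hL, hR]
  rw [← Finset.sum_filter_add_sum_filter_not Finset.univ C,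
      ← Finset.sum_filter_add_sum_filter_not Finset.univ C]
  congr 1
  · refine Finset.sum_nbij' (fun π => π * σ) (fun π => π * σ) ?_ ?_ ?_ ?_ ?_
    · intro π hπ
      simp only [Finset.mem_filter, Finset.mem_univ, true_and] at hπ ⊢
      exact (hCswap π).mpr hπ
    · intro π hπ
      simp only [Finset.mem_filter, Finset.mem_univ, true_and] at hπ ⊢
      exact (hCswap π).mpr hπ
    · intro π _; exact hσσ π
    · intro π _; exact hσσ π
    · intro π hπ
      simp only [Finset.mem_filter, Finset.mem_univ, true_and] at hπ
      have hc' : C (π * σ) := (hCswap π).mpr hπ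
      rw [if_pos hπ, if_pos hc']
      congr 1
      funext l
      by_cases hl : l = i
      · subst hl
        rw [Function.update_of_ne hij, Function.update_self]
        simp [hσ, Equiv.Perm.mul_apply]
      · by_cases hl' : l = j
        · subst hl'
          rw [Function.update_self, Function.update_of_ne (Ne.symm hij)]
          simp [hσ, Equiv.Perm.mul_apply]
        · rw [Function.update_of_ne hl', Function.update_of_ne hl]
          simp [hσ, Equiv.Perm.mul_apply, Equiv.swap_apply_of_ne_of_ne hl hl']
  · refine Finset.sum_congr rfl fun π hπ => ?_
    simp only [Finset.mem_filter, Finset.mem_univ, true_and] at hπ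
    rw [if_neg hπ, if_neg hπ]

/-- Averaging over all permutations, the unordered reproduction sum over all ordered pairs
`i ≠ j` equals twice the lookdown reproduction sum over pairs `i < j`. -/
theorem reproduction_symmetrization {E : Type*} {N : ℕ}
    (f : (Fin N → E × SBState) → ℝ) (z : Fin N → E × SBState) :
    ∑ π : Equiv.Perm (Fin N), ∑ i, ∑ j,
        (if i ≠ j then f (phiIJ i j (fun l => z (π l))) - f (fun l => z (π l)) else 0)
      = 2 * ∑ π : Equiv.Perm (Fin N), ∑ i, ∑ j,
          (if i < j then f (phiIJ i j (fun l => z (π l))) - f (fun l => z (π l)) else 0) := by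
  classical
  set D : Fin N → Fin N → Equiv.Perm (Fin N) → ℝ :=
    fun i j π => f (phiIJ i j (fun l => z (π l))) - f (fun l => z (π l)) with hD
  have split : ∀ (i j : Fin N) (x : ℝ),
      (if i ≠ j then x else 0) = (if i < j then x else 0) + (if j < i then x else 0) := by
    intro i j x
    rcases lt_trichotomy i j with h | h | h
    · simp [h, h.ne, h.ne', not_lt_of_gt h]
    · simp [h]
    · simp [h, h.ne, h.ne', not_lt_of_gt h]
  calc ∑ π : Equiv.Perm (Fin N), ∑ i, ∑ j, (if i ≠ j then D i j π else 0)
      = (∑ π : Equiv.Perm (Fin N), ∑ i, ∑ j, (if i < j then D i j π else 0))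
        + ∑ π : Equiv.Perm (Fin N), ∑ i, ∑ j, (if j < i then D i j π else 0) := by
        rw [← Finset.sum_add_distrib]
        refine Finset.sum_congr rfl fun π _ => ?_
        rw [← Finset.sum_add_distrib]
        refine Finset.sum_congr rfl fun i _ => ?_
        rw [← Finset.sum_add_distrib]
        exact Finset.sum_congr rfl fun j _ => split i j _
    _ = (∑ π : Equiv.Perm (Fin N), ∑ i, ∑ j, (if i < j then D i j π else 0))
        + ∑ π : Equiv.Perm (Fin N), ∑ i, ∑ j, (if i < j then D i j π else 0) := by
        congr 1
        -- swap i and j in the second sum, then use key_symm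
        have h1 : ∀ π : Equiv.Perm (Fin N),
            ∑ i, ∑ j, (if j < i then D i j π else 0)
              = ∑ i, ∑ j, (if i < j then D j i π else 0) := fun π => Finset.sum_comm
        simp only [h1]
        rw [Finset.sum_comm]
        conv_rhs => rw [Finset.sum_comm]
        refine Finset.sum_congr rfl fun i _ => ?_
        rw [Finset.sum_comm]
        conv_rhs => rw [Finset.sum_comm]
        refine Finset.sum_congr rfl fun j _ => ?_
        by_cases h : i < j
        · simp only [if_pos h, hD]
          rw [Finset.sum_sub_distrib, Finset.sum_sub_distrib,
            key_symm f z j i h.ne']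
        · simp [h]
    _ = 2 * ∑ π : Equiv.Perm (Fin N), ∑ i, ∑ j, (if i < j then D i j π else 0) := by
        ring

end
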